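/- The global function of the sand automaton S satisfies f_S ∘ f_{S^r} = id on the space of all configurations. -/

import Mathlib

/-- The extended integers `ℤ ∪ {-∞, +∞}`. -/
abbrev EZ : Type := WithBot (WithTop ℤ)

/-- Embedding of `ℤ` into the extended integers. -/
def finVal (n : ℤ) : EZ := ((n : WithTop ℤ) : EZ)

/-- The integer value of a finite extended integer (`0` on `±∞`). -/
def valZ (x : EZ) : ℤ := WithBot.recBotCoe 0 (fun y => WithTop.recTopCoe 0 id y) x

/-- The measuring device `β_l^m`. -/
noncomputable def beta (l : ℕ) (m : ℤ) (n : EZ) : EZ :=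
  if finVal (m + (l : ℤ)) < n then ⊤
  else if n < finVal (m - (l : ℤ)) then ⊥
  else WithBot.map (WithTop.map (fun k => k - m)) n

/-- Reference height: the value of `x` if finite, `0` if `x = ±∞`. -/
def refH (x : EZ) : ℤ := if x = ⊥ ∨ x = ⊤ then 0 else valZ x

/-- One-dimensional sandpile configurations. -/
abbrev Config : Type := ℤ → EZ

/-- The neighborhood sequence `d_r^i(c)`: the `2r`-tuple of measured differences. -/
noncomputable def nbhd (r : ℕ) (c : Config) (i : ℤ) : Fin (2 * r) → EZ :=
  fun j => beta r (refH (c i))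
    (c (i + (if (j : ℕ) < r then ((j : ℕ) : ℤ) - (r : ℤ) else ((j : ℕ) : ℤ) - (r : ℤ) + 1)))

/-- The global function of the sand automaton of radius `r` with local rule `lam`. -/
noncomputable def globalF (r : ℕ) (lam : (Fin (2 * r) → EZ) → ℤ) (c : Config) : Config :=
  fun i => if c i = ⊥ ∨ c i = ⊤ then c i
    else finVal (valZ (c i) + lam (nbhd r c i))

/-- Finite configurations. -/
def FiniteConf (c : Config) : Prop := ∃ k : ℕ, ∀ i : ℤ, (k : ℤ) ≤ |i| → c i = finVal 0

/-- Periodic configurations. -/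
def PeriodicConf (c : Config) : Prop := ∃ p : ℤ, p ≠ 0 ∧ ∀ i : ℤ, c (i + p) = c i


/-- The local rule of the sand automaton `S`:
`λ_S(x,y) = +1` if `x = +∞ ∧ y ≠ -∞`, `-1` if `x ≠ +∞ ∧ y = -∞`, `0` otherwise. -/
def lamS (v : Fin 2 → EZ) : ℤ :=
  if v 0 = ⊤ ∧ v 1 ≠ ⊥ then 1
  else if v 0 ≠ ⊤ ∧ v 1 = ⊥ then -1
  else 0

/-- The local rule of the sand automaton `S^r`:
`λ_{S^r}(x,y) = -1` if `x = +∞ ∧ y ≠ -∞`, `+1` if `x ≠ +∞ ∧ y = -∞`, `0` otherwise. -/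
def lamSr (v : Fin 2 → EZ) : ℤ :=
  if v 0 = ⊤ ∧ v 1 ≠ ⊥ then -1
  else if v 0 ≠ ⊤ ∧ v 1 = ⊥ then 1
  else 0

/-!
Write `λ_{S^r}(v) = [v₁ = −∞] − [v₀ = +∞]`, so that `λ_S = −λ_{S^r}`. At a finite cell the two
indicators say whether the height drops by at least 2 from the left neighbour to the cell, resp.
from the cell to its right neighbour. One step of `S^r` never changes these patterns: across a
drop of at least 2 the higher cell can only gain and the lower one only lose, while across a
drop of at most 1 it is the other way round. Hence `S`, applied after `S^r`, reads the same
pattern at every cell and undoes the move of `S^r`.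
-/

lemma EZ.cases (x : EZ) : x = ⊥ ∨ x = ⊤ ∨ ∃ k : ℤ, x = finVal k := by
  rcases x with _ | _ | k
  · exact Or.inl rfl
  · exact Or.inr (Or.inl rfl)
  · exact Or.inr (Or.inr ⟨k, rfl⟩)

@[simp] lemma finVal_lt_finVal {a b : ℤ} : finVal a < finVal b ↔ a < b := by simp [finVal]
@[simp] lemma finVal_lt_top (a : ℤ) : finVal a < ⊤ := WithBot.coe_lt_coe.mpr (WithTop.coe_lt_top a)
@[simp] lemma bot_lt_finVal (a : ℤ) : ⊥ < finVal a := WithBot.bot_lt_coe _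
@[simp] lemma finVal_ne_bot (a : ℤ) : finVal a ≠ ⊥ := (bot_lt_finVal a).ne'
@[simp] lemma finVal_ne_top (a : ℤ) : finVal a ≠ ⊤ := (finVal_lt_top a).ne
@[simp] lemma valZ_finVal (n : ℤ) : valZ (finVal n) = n := rfl
@[simp] lemma refH_finVal (n : ℤ) : refH (finVal n) = n := by simp [refH]

lemma beta_eq_top_iff (l : ℕ) (m : ℤ) (x : EZ) : beta l m x = ⊤ ↔ finVal (m + l) < x := by
  rcases EZ.cases x with rfl | rfl | ⟨k, rfl⟩
  · simp [beta]
  · simp [beta]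
  · simp only [beta, finVal_lt_finVal]
    split_ifs <;> simp [finVal] <;> omega

lemma beta_eq_bot_iff (l : ℕ) (m : ℤ) (x : EZ) : beta l m x = ⊥ ↔ x < finVal (m - l) := by
  rcases EZ.cases x with rfl | rfl | ⟨k, rfl⟩
  · simp [beta]
  · simp [beta]
  · simp only [beta, finVal_lt_finVal]
    split_ifs <;> simp [finVal] <;> omega

section GlobalFunction

variable (c : Config) (i : ℤ)

lemma nbhd_one_zero : nbhd 1 c i 0 = beta 1 (refH (c i)) (c (i - 1)) := by
  simp [nbhd, sub_eq_add_neg]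

lemma nbhd_one_one : nbhd 1 c i 1 = beta 1 (refH (c i)) (c (i + 1)) := by
  simp [nbhd]

variable {c i} (r : ℕ) (lam : (Fin (2 * r) → EZ) → ℤ)

lemma globalF_apply_of_eq_bot (h : c i = ⊥) : globalF r lam c i = ⊥ := by
  simp [globalF, h]

lemma globalF_apply_of_eq_top (h : c i = ⊤) : globalF r lam c i = ⊤ := by
  simp [globalF, h]

lemma globalF_apply_of_eq_finVal {n : ℤ} (h : c i = finVal n) :
    globalF r lam c i = finVal (n + lam (nbhd r c i)) := by
  simp [globalF, h]

end GlobalFunction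

lemma lamSr_eq (v : Fin 2 → EZ) :
    lamSr v = (if v 1 = ⊥ then 1 else 0) - (if v 0 = ⊤ then 1 else 0) := by
  unfold lamSr
  split_ifs <;> simp_all

lemma lamS_eq_neg_lamSr (v : Fin 2 → EZ) : lamS v = -lamSr v := by
  unfold lamS lamSr
  split_ifs <;> simp_all

lemma lamSr_nbhd_of_eq_finVal {c : Config} {i n : ℤ} (h : c i = finVal n) :
    lamSr (nbhd 1 c i) =
      (if c (i + 1) < finVal (n - 1) then 1 else 0) -
        (if finVal (n + 1) < c (i - 1) then 1 else 0) := by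
  simp only [lamSr_eq, nbhd_one_zero, nbhd_one_one, beta_eq_top_iff, beta_eq_bot_iff, h,
    refH_finVal, Nat.cast_one]

section StepOfSr

variable {c : Config}

local notation "δ" c:max i:max => lamSr (nbhd 1 c i)

lemma lamSr_step_drop_iff {j a b : ℤ} (ha : c j = finVal a) (hb : c (j + 1) = finVal b) :
    b + δ c (j + 1) + 1 < a + δ c j ↔ b + 1 < a := by
  have hj := lamSr_nbhd_of_eq_finVal ha
  have hj1 := lamSr_nbhd_of_eq_finVal hb
  rw [hb] at hj
  simp only [ha, add_sub_cancel_right, finVal_lt_finVal] at hj hj1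
  rw [hj, hj1]
  split_ifs <;> omega

lemma lamSr_step_left_drop_iff {i n : ℤ} (h : c i = finVal n) :
    finVal (n + δ c i + 1) < globalF 1 lamSr c (i - 1) ↔ finVal (n + 1) < c (i - 1) := by
  rcases EZ.cases (c (i - 1)) with hl | hl | ⟨l, hl⟩
  · simp [globalF_apply_of_eq_bot _ _ hl, hl]
  · simp [globalF_apply_of_eq_top _ _ hl, hl]
  · have := lamSr_step_drop_iff hl (by rwa [sub_add_cancel])
    rw [sub_add_cancel] at this
    simpa [globalF_apply_of_eq_finVal _ _ hl, hl] using this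

lemma lamSr_step_right_drop_iff {i n : ℤ} (h : c i = finVal n) :
    globalF 1 lamSr c (i + 1) < finVal (n + δ c i - 1) ↔ c (i + 1) < finVal (n - 1) := by
  rcases EZ.cases (c (i + 1)) with hr | hr | ⟨r, hr⟩
  · simp [globalF_apply_of_eq_bot _ _ hr, hr]
  · simp [globalF_apply_of_eq_top _ _ hr, hr]
  · have := lamSr_step_drop_iff h hr
    simp only [globalF_apply_of_eq_finVal _ _ hr, hr, finVal_lt_finVal]
    omega

lemma lamSr_nbhd_globalF_lamSr {i n : ℤ} (h : c i = finVal n) :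
    δ (globalF 1 lamSr c) i = δ c i := by
  rw [lamSr_nbhd_of_eq_finVal (globalF_apply_of_eq_finVal _ _ h)]
  simp only [lamSr_step_left_drop_iff h, lamSr_step_right_drop_iff h]
  exact (lamSr_nbhd_of_eq_finVal h).symm

end StepOfSr

/-- The global function of `S` composed with the global function of `S^r`
is the identity on the space of all configurations. -/
theorem S_comp_Sr_eq_id : (globalF 1 lamS) ∘ (globalF 1 lamSr) = id := by
  funext c i
  rcases EZ.cases (c i) with h | h | ⟨n, h⟩
  · simp [globalF_apply_of_eq_bot _ _ (globalF_apply_of_eq_bot _ _ h), h]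
  · simp [globalF_apply_of_eq_top _ _ (globalF_apply_of_eq_top _ _ h), h]
  · rw [Function.comp_apply, globalF_apply_of_eq_finVal _ _ (globalF_apply_of_eq_finVal _ _ h),
      lamS_eq_neg_lamSr, lamSr_nbhd_globalF_lamSr h, add_neg_cancel_right, id, h]
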